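/- Let n ≥ 1 and let μ_1, …, μ_n be real numbers with −1 < μ_k < 1 for every k. Fix a > −1/2 and set μ_{k,a} = μ_k + a(1+μ_k) and f(x;a) = x·∏_{k=1}^{n}(1 + μ_{k,a}·x). Then for every x with −1/(1+2a) ≤ x ≤ 1, the partial derivative of f with respect to a satisfies (∂f/∂a)(x;a) = x²·∑_{j=1}^{n} (1+μ_j)·∏_{k≠j}(1 + μ_{k,a}·x), and this quantity is nonnegative. -/

import Mathlib

open Real MeasureTheory Filter Set Finset

theorem partial_deriv_f_nonneg (n : ℕ) (hn : 1 ≤ n) (μ : Fin n → ℝ)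
    (hμ : ∀ k, -1 < μ k ∧ μ k < 1) (a : ℝ) (ha : -1/2 < a)
    (x : ℝ) (hx₁ : -1/(1+2*a) ≤ x) (hx₂ : x ≤ 1) :
    deriv (fun b : ℝ => x * ∏ k, (1 + (μ k + b * (1 + μ k)) * x)) a
      = x^2 * ∑ j, (1 + μ j) *
          ∏ k ∈ Finset.univ.erase j, (1 + (μ k + a * (1 + μ k)) * x) ∧
    0 ≤ deriv (fun b : ℝ => x * ∏ k, (1 + (μ k + b * (1 + μ k)) * x)) a := by
  have h2a : (0:ℝ) < 1 + 2*a := by linarith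
  have hx : -1 ≤ x * (1 + 2*a) := by
    rw [div_le_iff₀ h2a] at hx₁; linarith
  have hpos : ∀ k, 0 ≤ 1 + (μ k + a * (1 + μ k)) * x := by
    intro k
    obtain ⟨h1, h2⟩ := hμ k
    have hc1 : -1 < μ k + a * (1 + μ k) := by nlinarith
    have hc2 : μ k + a * (1 + μ k) < 1 + 2*a := by nlinarith
    rcases le_or_gt 0 x with hx0 | hx0
    · nlinarith
    · nlinarith
  have hd : ∀ k ∈ Finset.univ, HasDerivAt
      (fun b : ℝ => 1 + (μ k + b * (1 + μ k)) * x) ((1 + μ k) * x) a := by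
    intro k _
    have h := (((hasDerivAt_id a).mul_const (1 + μ k)).const_add (μ k)).mul_const x
    simpa using h.const_add 1
  have hprod := (HasDerivAt.fun_finsetProd hd).const_mul x
  have hderiv : deriv (fun b : ℝ => x * ∏ k, (1 + (μ k + b * (1 + μ k)) * x)) a
      = x * ∑ i, (∏ j ∈ Finset.univ.erase i, (1 + (μ j + a * (1 + μ j)) * x))
          • ((1 + μ i) * x) := hprod.deriv
  have heq : deriv (fun b : ℝ => x * ∏ k, (1 + (μ k + b * (1 + μ k)) * x)) a
      = x^2 * ∑ j, (1 + μ j) *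
          ∏ k ∈ Finset.univ.erase j, (1 + (μ k + a * (1 + μ k)) * x) := by
    rw [hderiv, Finset.mul_sum, Finset.mul_sum]
    apply Finset.sum_congr rfl
    intro i _
    simp only [smul_eq_mul]
    ring
  refine ⟨heq, ?_⟩
  rw [heq]
  apply mul_nonneg (sq_nonneg x)
  apply Finset.sum_nonneg
  intro j _
  apply mul_nonneg
  · linarith [(hμ j).1]
  · exact Finset.prod_nonneg fun k _ => hpos k
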